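/- For integers n, m ≥ 5, all four mutual-visibility numbers of K_n × K_m coincide: μ_t(K_n × K_m) = μ_o(K_n × K_m) = μ_d(K_n × K_m) = μ(K_n × K_m) = nm − 4. -/

import Mathlib

namespace MutualVisibility

open SimpleGraph

variable {V W : Type*}

/-- `x` and `y` are `X`-visible in `G`: there is a shortest `x,y`-path all of whose
internal vertices avoid `X`. -/
def Visible (G : SimpleGraph V) (X : Set V) (x y : V) : Prop :=
  ∃ p : G.Walk x y, p.length = G.dist x y ∧ ∀ v ∈ p.support, v ≠ x → v ≠ y → v ∉ X

/-- `X` is a mutual-visibility set: any two vertices of `X` are `X`-visible. -/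
def IsMutualVisSet (G : SimpleGraph V) (X : Set V) : Prop :=
  ∀ x ∈ X, ∀ y ∈ X, Visible G X x y

/-- outer mutual-visibility set -/
def IsOuterMutualVisSet (G : SimpleGraph V) (X : Set V) : Prop :=
  IsMutualVisSet G X ∧ ∀ x ∈ X, ∀ y ∉ X, Visible G X x y

/-- dual mutual-visibility set -/
def IsDualMutualVisSet (G : SimpleGraph V) (X : Set V) : Prop :=
  IsMutualVisSet G X ∧ ∀ x ∉ X, ∀ y ∉ X, Visible G X x y

/-- total mutual-visibility set -/
def IsTotalMutualVisSet (G : SimpleGraph V) (X : Set V) : Prop :=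
  ∀ x y : V, Visible G X x y

/-- mutual-visibility number μ(G) -/
noncomputable def mu (G : SimpleGraph V) : ℕ :=
  sSup {k | ∃ X : Set V, IsMutualVisSet G X ∧ X.ncard = k}

/-- outer mutual-visibility number μ_o(G) -/
noncomputable def muOuter (G : SimpleGraph V) : ℕ :=
  sSup {k | ∃ X : Set V, IsOuterMutualVisSet G X ∧ X.ncard = k}

/-- dual mutual-visibility number μ_d(G) -/
noncomputable def muDual (G : SimpleGraph V) : ℕ :=
  sSup {k | ∃ X : Set V, IsDualMutualVisSet G X ∧ X.ncard = k}

/-- total mutual-visibility number μ_t(G) -/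
noncomputable def muTotal (G : SimpleGraph V) : ℕ :=
  sSup {k | ∃ X : Set V, IsTotalMutualVisSet G X ∧ X.ncard = k}

/-- `H` contains a subgraph copy of `F`. -/
def ContainsCopy (F : SimpleGraph W) (H : SimpleGraph V) : Prop :=
  ∃ f : W → V, Function.Injective f ∧ ∀ a b, F.Adj a b → H.Adj (f a) (f b)

/-- The Turán number ex(n; F): max number of edges of an `n`-vertex graph with no copy of `F`. -/
noncomputable def exNum (n : ℕ) (F : SimpleGraph W) : ℕ :=
  sSup {k | ∃ H : SimpleGraph (Fin n), ¬ ContainsCopy F H ∧ H.edgeSet.ncard = k}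

/-- The direct (tensor/categorical) product of graphs. -/
def directProd (G : SimpleGraph V) (H : SimpleGraph W) : SimpleGraph (V × W) where
  Adj x y := G.Adj x.1 y.1 ∧ H.Adj x.2 y.2
  symm := ⟨fun _ _ h => ⟨h.1.symm, h.2.symm⟩⟩
  loopless := ⟨fun x h => G.loopless.irrefl x.1 h.1⟩

/-- The join `G + H` of two graphs. -/
def graphJoin (G : SimpleGraph V) (H : SimpleGraph W) : SimpleGraph (V ⊕ W) where
  Adj u v := match u, v with
    | Sum.inl a, Sum.inl b => G.Adj a b
    | Sum.inr a, Sum.inr b => H.Adj a b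
    | _, _ => True
  symm := ⟨fun u v => match u, v with
    | Sum.inl _, Sum.inl _ => fun h => G.symm.symm _ _ h
    | Sum.inr _, Sum.inr _ => fun h => H.symm.symm _ _ h
    | Sum.inl _, Sum.inr _ => fun _ => trivial
    | Sum.inr _, Sum.inl _ => fun _ => trivial⟩
  loopless := ⟨fun u => match u with
    | Sum.inl a => G.loopless.irrefl a
    | Sum.inr a => H.loopless.irrefl a⟩

/-- A big-μ graph: `G = (K_1 ∪ K_t) + H` for some `t ≥ 0` and some graph `H`. -/
def IsBigMu {V : Type} (G : SimpleGraph V) : Prop :=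
  ∃ (t : ℕ) (W : Type) (H : SimpleGraph W),
    Nonempty (G ≃g graphJoin ((⊤ : SimpleGraph (Fin 1)) ⊕g (⊤ : SimpleGraph (Fin t))) H)

/-- A cograph: a graph with no induced path on four vertices. -/
def IsCograph (G : SimpleGraph V) : Prop :=
  ¬ ∃ f : Fin 4 → V, Function.Injective f ∧
      ∀ a b, (pathGraph 4).Adj a b ↔ G.Adj (f a) (f b)

/-- The Petersen graph, realized as the Kneser graph K(5,2). -/
def petersen : SimpleGraph {s : Finset (Fin 5) // s.card = 2} where
  Adj a b := Disjoint a.1 b.1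
  symm := ⟨fun _ _ h => h.symm⟩
  loopless := by
    constructor
    rintro ⟨s, hs⟩ h
    rw [disjoint_self, Finset.bot_eq_empty] at h
    subst h
    simp at hs

/-!
Two distinct non-adjacent vertices of `K_n × K_m` lie on a common row or column and are at
distance 2, so they are `X`-visible exactly when they have a common neighbour outside `X`.
Deleting four vertices with pairwise distinct rows and columns leaves a total mutual-visibility
set: a pair on a common line rules out at most three lines, each containing at most one deleted
vertex. Conversely, if at most three vertices lie outside `X`, there are two vertices of `X` on a
common line such that every vertex outside `X` shares a line with one of them, so these two have
no common neighbour outside `X`.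
-/

section Visibility

variable {G : SimpleGraph V} {X : Set V} {x y z : V}

lemma visible_self (G : SimpleGraph V) (X : Set V) (x : V) : Visible G X x x :=
  ⟨Walk.nil, by simp, fun v hv hvx _ => absurd (Walk.mem_support_nil_iff.1 hv) hvx⟩

lemma visible_of_adj (X : Set V) (h : G.Adj x y) : Visible G X x y := by
  refine ⟨h.toWalk, by simp [dist_eq_one_iff_adj.2 h], fun v hv hvx hvy => ?_⟩
  simp only [Walk.support_cons, Walk.support_nil, List.mem_cons, List.not_mem_nil] at hv
  tauto

lemma dist_eq_two_of_adj_adj (hxy : x ≠ y) (hnadj : ¬G.Adj x y) (hxz : G.Adj x z)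
    (hzy : G.Adj z y) : G.dist x y = 2 := by
  have hle : G.dist x y ≤ 2 := by simpa using dist_le (hxz.toWalk.append hzy.toWalk)
  have hne0 : G.dist x y ≠ 0 := mt (Reachable.dist_eq_zero_iff ⟨hxz.toWalk.append hzy.toWalk⟩).1 hxy
  have hne1 : G.dist x y ≠ 1 := mt dist_eq_one_iff_adj.1 hnadj
  omega

lemma visible_of_adj_adj (hxy : x ≠ y) (hnadj : ¬G.Adj x y) (hxz : G.Adj x z)
    (hzy : G.Adj z y) (hz : z ∉ X) : Visible G X x y := by
  refine ⟨hxz.toWalk.append hzy.toWalk, ?_, fun v hv hvx hvy => ?_⟩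
  · simp [dist_eq_two_of_adj_adj hxy hnadj hxz hzy]
  · obtain rfl | rfl | rfl : v = x ∨ v = z ∨ v = y := by simpa [or_assoc] using hv
    exacts [absurd rfl hvx, hz, absurd rfl hvy]

lemma Visible.exists_adj_adj_notMem (h : Visible G X x y) (hd : G.dist x y = 2) :
    ∃ z ∉ X, G.Adj x z ∧ G.Adj z y := by
  obtain ⟨p, hlen, hint⟩ := h
  rw [hd] at hlen
  match p, hlen with
  | .cons hxz (.cons hzy .nil), _ => exact ⟨_, hint _ (by simp) hxz.ne' hzy.ne, hxz, hzy⟩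

lemma IsTotalMutualVisSet.isMutualVisSet (h : IsTotalMutualVisSet G X) : IsMutualVisSet G X :=
  fun x _ y _ => h x y

lemma IsTotalMutualVisSet.isOuterMutualVisSet (h : IsTotalMutualVisSet G X) :
    IsOuterMutualVisSet G X :=
  ⟨h.isMutualVisSet, fun x _ y _ => h x y⟩

lemma IsTotalMutualVisSet.isDualMutualVisSet (h : IsTotalMutualVisSet G X) :
    IsDualMutualVisSet G X :=
  ⟨h.isMutualVisSet, fun x _ y _ => h x y⟩

lemma mv_numbers_eq_of_isTotalMutualVisSet {N : ℕ} (htot : IsTotalMutualVisSet G X)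
    (hcard : X.ncard = N) (hle : ∀ Y, IsMutualVisSet G Y → Y.ncard ≤ N) :
    muTotal G = N ∧ muOuter G = N ∧ muDual G = N ∧ mu G = N := by
  have hsSup : ∀ P : Set V → Prop, (∀ Y, P Y → IsMutualVisSet G Y) → P X →
      sSup {k | ∃ Y, P Y ∧ Y.ncard = k} = N := fun P hP hX =>
    IsGreatest.csSup_eq ⟨⟨X, hX, hcard⟩, by rintro _ ⟨Y, hY, rfl⟩; exact hle Y (hP Y hY)⟩
  exact ⟨hsSup _ (fun _ h => h.isMutualVisSet) htot,
    hsSup _ (fun _ h => h.1) htot.isOuterMutualVisSet,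
    hsSup _ (fun _ h => h.1) htot.isDualMutualVisSet, hsSup _ (fun _ h => h) htot.isMutualVisSet⟩

end Visibility

lemma exists_ne_ne_ne {α : Type*} [Fintype α] (h : 3 < Fintype.card α) (a b c : α) :
    ∃ i, i ≠ a ∧ i ≠ b ∧ i ≠ c := by
  classical
  obtain ⟨i, -, hi⟩ := Finset.exists_mem_notMem_of_card_lt_card
    ((Finset.card_le_three (a := a) (b := b) (c := c)).trans_lt (h.trans_eq Finset.card_univ.symm))
  exact ⟨i, by simpa [not_or] using hi⟩

lemma pairwise_ne_or_exists_mem_pair {γ : Type*} [Nontrivial γ] (a b c : γ) :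
    (a ≠ b ∧ a ≠ c ∧ b ≠ c) ∨
      ∃ i i', i ≠ i' ∧ (a = i ∨ a = i') ∧ (b = i ∨ b = i') ∧ (c = i ∨ c = i') := by
  by_cases hab : a = b <;> by_cases hac : a = c <;> by_cases hbc : b = c
  all_goals first
    | exact Or.inl ⟨hab, hac, hbc⟩
    | obtain ⟨i', hi'⟩ := exists_ne a; exact Or.inr ⟨a, i', hi'.symm, by tauto, by tauto, by tauto⟩
    | exact Or.inr ⟨a, b, hab, by tauto, by tauto, by tauto⟩
    | exact Or.inr ⟨a, c, hac, by tauto, by tauto, by tauto⟩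

lemma exists_apply_ne_ne_ne {ι α β : Type*} [Fintype ι] (hι : 3 < Fintype.card ι) {f : ι → α}
    {g : ι → β} (hf : Function.Injective f) (hg : Function.Injective g) (a : α) (b c : β) :
    ∃ k, f k ≠ a ∧ g k ≠ b ∧ g k ≠ c := by
  have : Nonempty ι := Fintype.card_pos_iff.1 (by omega)
  obtain ⟨k, ha, hb, hc⟩ := exists_ne_ne_ne hι (Function.invFun f a) (Function.invFun g b)
    (Function.invFun g c)
  refine ⟨k, ?_, ?_, ?_⟩ <;> rintro rfl
  exacts [ha (Function.leftInverse_invFun hf k).symm, hb (Function.leftInverse_invFun hg k).symm,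
    hc (Function.leftInverse_invFun hg k).symm]

section DirectProd

variable {α β : Type*}

local notation "𝕂" => directProd (⊤ : SimpleGraph α) (⊤ : SimpleGraph β)

lemma directProd_top_adj {x y : α × β} : (𝕂).Adj x y ↔ x.1 ≠ y.1 ∧ x.2 ≠ y.2 := Iff.rfl

/-- `x, y` are non-adjacent vertices outside `S` with no common neighbour in `S`. -/
def IsShieldedPair (S : Set (α × β)) (x y : α × β) : Prop :=
  x ∉ S ∧ y ∉ S ∧ x ≠ y ∧ (x.1 = y.1 ∨ x.2 = y.2) ∧
    ∀ p ∈ S, p.1 = x.1 ∨ p.1 = y.1 ∨ p.2 = x.2 ∨ p.2 = y.2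

variable {S T : Set (α × β)} {x y : α × β}

lemma IsShieldedPair.mono (hST : S ⊆ T) (h : IsShieldedPair T x y) : IsShieldedPair S x y :=
  ⟨fun hx => h.1 (hST hx), fun hy => h.2.1 (hST hy), h.2.2.1, h.2.2.2.1,
    fun p hp => h.2.2.2.2 p (hST hp)⟩

lemma isShieldedPair_of_snd_mem_pair {i : α} {j j' : β} (hj : j ≠ j') (hi : ∀ p ∈ S, p.1 ≠ i)
    (hS : ∀ p ∈ S, p.2 = j ∨ p.2 = j') : IsShieldedPair S (i, j) (i, j') :=
  ⟨fun h => hi _ h rfl, fun h => hi _ h rfl, by simpa using hj, Or.inl rfl,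
    fun p hp => Or.inr (Or.inr (hS p hp))⟩

lemma isShieldedPair_of_fst_mem_pair {i i' : α} {j : β} (hi : i ≠ i') (hj : ∀ p ∈ S, p.2 ≠ j)
    (hS : ∀ p ∈ S, p.1 = i ∨ p.1 = i') : IsShieldedPair S (i, j) (i', j) :=
  ⟨fun h => hj _ h rfl, fun h => hj _ h rfl, by simpa using hi, Or.inr rfl,
    fun p hp => (hS p hp).imp id Or.inl⟩

lemma isShieldedPair_triple {a b c : α × β} (hab : a.1 ≠ b.1) (hac : a.1 ≠ c.1)
    (hab' : a.2 ≠ b.2) (hac' : a.2 ≠ c.2) (hbc' : b.2 ≠ c.2) :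
    IsShieldedPair {a, b, c} (a.1, b.2) (a.1, c.2) := by
  refine ⟨?_, ?_, by simpa using hbc', Or.inl rfl, ?_⟩
  all_goals simp only [Set.mem_insert_iff, Set.mem_singleton_iff, Prod.ext_iff]; tauto

lemma exists_isShieldedPair [Fintype α] [Fintype β] (hα : 3 < Fintype.card α)
    (hβ : 3 < Fintype.card β) (a b c : α × β) : ∃ x y, IsShieldedPair {a, b, c} x y := by
  have : Nontrivial α := Fintype.one_lt_card_iff_nontrivial.1 (by omega)
  have : Nontrivial β := Fintype.one_lt_card_iff_nontrivial.1 (by omega)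
  rcases pairwise_ne_or_exists_mem_pair a.2 b.2 c.2 with ⟨hab', hac', hbc'⟩ | ⟨j, j', hj, hcol⟩
  · rcases pairwise_ne_or_exists_mem_pair a.1 b.1 c.1 with ⟨hab, hac, -⟩ | ⟨i, i', hi, hrow⟩
    · exact ⟨_, _, isShieldedPair_triple hab hac hab' hac' hbc'⟩
    · obtain ⟨j, hj⟩ := exists_ne_ne_ne hβ a.2 b.2 c.2
      refine ⟨_, _, isShieldedPair_of_fst_mem_pair (j := j) hi ?_ ?_⟩ <;>
        rintro p (rfl | rfl | rfl) <;> tauto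
  · obtain ⟨i, hi⟩ := exists_ne_ne_ne hα a.1 b.1 c.1
    refine ⟨_, _, isShieldedPair_of_snd_mem_pair (i := i) hj ?_ ?_⟩ <;>
      rintro p (rfl | rfl | rfl) <;> tauto

lemma exists_adj_adj [Fintype α] [Fintype β] (hα : 2 < Fintype.card α)
    (hβ : 2 < Fintype.card β) (x y : α × β) : ∃ z, (𝕂).Adj x z ∧ (𝕂).Adj z y := by
  obtain ⟨i, hix, hiy⟩ := ENat.exists_ne_ne_of_three_le
    (by rw [ENat.card_eq_coe_fintype_card]; exact_mod_cast hα) x.1 y.1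
  obtain ⟨j, hjx, hjy⟩ := ENat.exists_ne_ne_of_three_le
    (by rw [ENat.card_eq_coe_fintype_card]; exact_mod_cast hβ) x.2 y.2
  exact ⟨(i, j), ⟨hix.symm, hjx.symm⟩, hiy, hjy⟩

lemma IsShieldedPair.not_isMutualVisSet [Fintype α] [Fintype β] (hα : 2 < Fintype.card α)
    (hβ : 2 < Fintype.card β) {X : Set (α × β)} (h : IsShieldedPair Xᶜ x y) :
    ¬IsMutualVisSet 𝕂 X := by
  obtain ⟨hx, hy, hxy, hline, hS⟩ := h
  have hnadj : ¬(𝕂).Adj x y := by rw [directProd_top_adj]; tauto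
  intro hX
  obtain ⟨z, hxz, hzy⟩ := exists_adj_adj hα hβ x y
  obtain ⟨w, hw, hxw, hwy⟩ := (hX x (not_not.1 hx) y (not_not.1 hy)).exists_adj_adj_notMem
    (dist_eq_two_of_adj_adj hxy hnadj hxz hzy)
  rw [directProd_top_adj] at hxw hwy
  have := hS w hw
  tauto

lemma four_le_ncard_compl_of_isMutualVisSet [Fintype α] [Fintype β] (hα : 3 < Fintype.card α)
    (hβ : 3 < Fintype.card β) {X : Set (α × β)} (hX : IsMutualVisSet 𝕂 X) : 4 ≤ Xᶜ.ncard := by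
  by_contra! h
  have hcard : 3 ≤ (Set.univ : Set (α × β)).ncard := by
    rw [Set.ncard_univ, Nat.card_eq_fintype_card, Fintype.card_prod]
    nlinarith
  obtain ⟨T, hXT, -, hT⟩ := Set.exists_subsuperset_card_eq (Set.subset_univ Xᶜ) (by omega) hcard
  obtain ⟨a, b, c, -, -, -, rfl⟩ := Set.ncard_eq_three.1 hT
  obtain ⟨x, y, hxy⟩ := exists_isShieldedPair hα hβ a b c
  exact (hxy.mono hXT).not_isMutualVisSet (by omega) (by omega) hX

lemma isTotalMutualVisSet_compl_range {f : Fin 4 → α} {g : Fin 4 → β}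
    (hf : Function.Injective f) (hg : Function.Injective g) :
    IsTotalMutualVisSet (𝕂) (Set.range fun k => (f k, g k))ᶜ := by
  intro x y
  by_cases hxy : x = y
  · exact hxy ▸ visible_self _ _ x
  by_cases hadj : (𝕂).Adj x y
  · exact visible_of_adj _ hadj
  obtain ⟨k, hxk, hky⟩ : ∃ k, (𝕂).Adj x (f k, g k) ∧ (𝕂).Adj (f k, g k) y := by
    simp only [directProd_top_adj, not_and_or, not_not] at hadj ⊢
    rcases hadj with h | h
    · obtain ⟨k, h1, h2, h3⟩ := exists_apply_ne_ne_ne (by simp) hf hg x.1 x.2 y.2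
      exact ⟨k, ⟨Ne.symm h1, Ne.symm h2⟩, h ▸ h1, h3⟩
    · obtain ⟨k, h1, h2, h3⟩ := exists_apply_ne_ne_ne (by simp) hg hf x.2 x.1 y.1
      exact ⟨k, ⟨Ne.symm h2, Ne.symm h1⟩, h3, h ▸ h1⟩
  exact visible_of_adj_adj hxy hadj hxk hky (Set.notMem_compl_iff.2 ⟨k, rfl⟩)

lemma ncard_add_ncard_compl_prod [Fintype α] [Fintype β] (X : Set (α × β)) :
    X.ncard + Xᶜ.ncard = Fintype.card α * Fintype.card β := by
  rw [Set.ncard_add_ncard_compl, Nat.card_eq_fintype_card, Fintype.card_prod]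

theorem mv_numbers_directProd_top [Fintype α] [Fintype β] (hα : 3 < Fintype.card α)
    (hβ : 3 < Fintype.card β) :
    muTotal (𝕂) = Fintype.card α * Fintype.card β - 4 ∧
      muOuter (𝕂) = Fintype.card α * Fintype.card β - 4 ∧
      muDual (𝕂) = Fintype.card α * Fintype.card β - 4 ∧
      mu (𝕂) = Fintype.card α * Fintype.card β - 4 := by
  obtain ⟨f⟩ : Nonempty (Fin 4 ↪ α) :=
    Function.Embedding.nonempty_of_card_le (by rw [Fintype.card_fin]; exact hα)
  obtain ⟨g⟩ : Nonempty (Fin 4 ↪ β) :=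
    Function.Embedding.nonempty_of_card_le (by rw [Fintype.card_fin]; exact hβ)
  have hdiag : (Set.range fun k => (f k, g k)).ncard = 4 := by
    rw [Set.ncard_range_of_injective fun k l h => f.injective (Prod.ext_iff.1 h).1]
    simp
  refine mv_numbers_eq_of_isTotalMutualVisSet
    (isTotalMutualVisSet_compl_range f.injective g.injective) ?_ fun Y hY => ?_
  · have := ncard_add_ncard_compl_prod (Set.range fun k => (f k, g k))
    omega
  · have := ncard_add_ncard_compl_prod Y
    have := four_le_ncard_compl_of_isMutualVisSet hα hβ hY
    omega

end DirectProd

theorem all_mv_numbers_directProd_complete (n m : ℕ) (hn : 5 ≤ n) (hm : 5 ≤ m) :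
    muTotal (directProd (⊤ : SimpleGraph (Fin n)) (⊤ : SimpleGraph (Fin m))) = n * m - 4 ∧
    muOuter (directProd (⊤ : SimpleGraph (Fin n)) (⊤ : SimpleGraph (Fin m))) = n * m - 4 ∧
    muDual (directProd (⊤ : SimpleGraph (Fin n)) (⊤ : SimpleGraph (Fin m))) = n * m - 4 ∧
    mu (directProd (⊤ : SimpleGraph (Fin n)) (⊤ : SimpleGraph (Fin m))) = n * m - 4 := by
  simpa using mv_numbers_directProd_top (α := Fin n) (β := Fin m) (by simp; omega) (by simp; omega)

end MutualVisibility
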